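/- Let N be a rooted phylogenetic network on a finite set X. The normalisation Ñ of N is a tree (every vertex of Ñ has in-degree at most 1) if and only if the collection {C_N(v) : v ∈ V_vis(N)} of clusters of visible vertices of N forms a hierarchy on X. -/

import Mathlib

/-!
Formalisation framework for rooted phylogenetic networks.

A network is represented as a directed graph on an ambient vertex type `V`:
a vertex set `verts`, a root vertex `root`, and an arc relation `arc`.
-/

structure Net (V : Type*) where
  verts : Set V
  root : V
  arc : V → V → Prop

namespace Net

variable {V : Type*} {W : Type*}

/-- `N.reach u v` means there is a (possibly empty) directed path from `u` to `v`. -/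
def reach (N : Net V) : V → V → Prop := Relation.ReflTransGen N.arc

/-- The in-degree of a vertex. -/
noncomputable def inDeg (N : Net V) (v : V) : ℕ := {u | N.arc u v}.ncard

/-- The out-degree of a vertex. -/
noncomputable def outDeg (N : Net V) (v : V) : ℕ := {w | N.arc v w}.ncard

/-- The leaves of `N`: the vertices of out-degree 0. -/
def leaves (N : Net V) : Set V := {v ∈ N.verts | N.outDeg v = 0}

/-- `N.IsPathFrom u v l` : the list `l` is a directed path in `N` from `u` to `v`
(consecutive entries joined by arcs; a one-element list is the empty path). -/
def IsPathFrom (N : Net V) (u v : V) (l : List V) : Prop :=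
  l.Chain' N.arc ∧ l.head? = some u ∧ l.getLast? = some v

/-- A vertex is visible if some leaf is such that every directed path from the
root to that leaf passes through the vertex. -/
def Visible (N : Net V) (x : V) : Prop :=
  x ∈ N.verts ∧ ∃ y ∈ N.leaves, ∀ l : List V, N.IsPathFrom N.root y l → x ∈ l

/-- A subdividing vertex is one of in-degree 1 and out-degree 1. -/
def Subdividing (N : Net V) (v : V) : Prop := N.inDeg v = 1 ∧ N.outDeg v = 1

/-- The digraph `Cov(N)` on the visible vertices of `N`: an arc `(u,v)` whenever
`u ≠ v`, `u →_N v`, and no visible vertex lies strictly between `u` and `v`. -/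
def cov (N : Net V) : Net V where
  verts := {v | N.Visible v}
  root := N.root
  arc u v := N.Visible u ∧ N.Visible v ∧ u ≠ v ∧ N.reach u v ∧
    ¬ ∃ w, N.Visible w ∧ w ≠ u ∧ w ≠ v ∧ N.reach u w ∧ N.reach w v

/-- The normalisation `Ñ` of `N`: obtained from `Cov(N)` by suppressing every
subdividing vertex.  Its vertices are the visible vertices of `N` that are not
subdividing in `Cov(N)`, with an arc `(u,v)` whenever `Cov(N)` has a directed path
from `u` to `v` (of length at least one) all of whose interior vertices are
subdividing in `Cov(N)`. -/
def normalise (N : Net V) : Net V where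
  verts := {v | N.Visible v ∧ ¬ N.cov.Subdividing v}
  root := N.root
  arc u v := (N.Visible u ∧ ¬ N.cov.Subdividing u) ∧ (N.Visible v ∧ ¬ N.cov.Subdividing v) ∧
    ∃ l : List V, N.cov.IsPathFrom u v l ∧ 2 ≤ l.length ∧
      ∀ w ∈ l.tail.dropLast, N.cov.Subdividing w

/-- `N` is a rooted phylogenetic network on the finite nonempty leaf set `X`. -/
structure IsPhylo (N : Net V) (X : Set V) : Prop where
  finite : N.verts.Finite
  nonempty : X.Nonempty
  arc_mem : ∀ ⦃u v : V⦄, N.arc u v → u ∈ N.verts ∧ v ∈ N.verts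
  acyclic : ∀ ⦃u v : V⦄, N.arc u v → ¬ N.reach v u
  root_mem : N.root ∈ N.verts
  root_inDeg : N.inDeg N.root = 0
  root_unique : ∀ v ∈ N.verts, N.inDeg v = 0 → v = N.root
  leaves_eq : N.leaves = X
  leaf_inDeg : ∀ x ∈ X, N.inDeg x = 1
  interior_deg : ∀ v ∈ N.verts, v ≠ N.root → v ∉ X →
    (N.inDeg v = 1 ∧ 2 ≤ N.outDeg v) ∨ (N.outDeg v = 1 ∧ 2 ≤ N.inDeg v)

/-- `N` has no shortcuts: no arc `(u,v)` such that there is also a directed path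
from `u` to `v` of length at least 2 (i.e. a path-list with at least 3 entries). -/
def NoShortcuts (N : Net V) : Prop :=
  ∀ u v : V, N.arc u v → ¬ ∃ l : List V, N.IsPathFrom u v l ∧ 3 ≤ l.length

/-- Tree-child: every vertex is visible. -/
def TreeChild (N : Net V) : Prop := ∀ v ∈ N.verts, N.Visible v

/-- Normal: tree-child with no shortcuts. -/
def Normal (N : Net V) : Prop := N.TreeChild ∧ N.NoShortcuts

/-- A tree: every vertex has in-degree at most 1. -/
def IsTree (N : Net V) : Prop := ∀ v ∈ N.verts, N.inDeg v ≤ 1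

/-- The cluster of `v`: the set of leaves reachable from `v`. -/
def cluster (N : Net V) (v : V) : Set V := {x ∈ N.leaves | N.reach v x}

/-- The identifying set of `v`: the set of leaves `x` such that every directed
path from the root to `x` passes through `v`. -/
def ident (N : Net V) (v : V) : Set V :=
  {x ∈ N.leaves | ∀ l : List V, N.IsPathFrom N.root x l → v ∈ l}

/-- A digraph isomorphism between two networks, given by the map `f`. -/
def NetEquiv (M : Net V) (M' : Net W) (f : V → W) : Prop :=
  Set.BijOn f M.verts M'.verts ∧
    ∀ u ∈ M.verts, ∀ v ∈ M.verts, (M.arc u v ↔ M'.arc (f u) (f v))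

/-- Two networks over the same ambient type are equivalent relative to a leaf set
`X` if there is a digraph isomorphism between them fixing each element of `X`. -/
def EquivOn (M M' : Net V) (X : Set V) : Prop :=
  ∃ f : V → V, NetEquiv M M' f ∧ ∀ x ∈ X, f x = x

/-- `N₁ ⊕ N₂` : disjoint copies of `N₁` and `N₂` under a new root (`none`). -/
def oplus {V₁ V₂ : Type*} (N₁ : Net V₁) (N₂ : Net V₂) : Net (Option (V₁ ⊕ V₂)) where
  verts := insert none
    ((fun v => some (Sum.inl v)) '' N₁.verts ∪ (fun v => some (Sum.inr v)) '' N₂.verts)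
  root := none
  arc a b :=
    match a, b with
    | none, some (Sum.inl w) => w = N₁.root
    | none, some (Sum.inr w) => w = N₂.root
    | some (Sum.inl u), some (Sum.inl w) => N₁.arc u w
    | some (Sum.inr u), some (Sum.inr w) => N₂.arc u w
    | _, _ => False

/-- `N₁ ⊗ N₂` : identify each leaf `x` of `N₁` with the root of its own copy of `N₂`;
the copy of a non-leaf vertex `u` of `N₁` is `Sum.inl u`, and the vertex `w` of the
copy of `N₂` attached at leaf `x` of `N₁` is `Sum.inr (x, w)`. -/
def otimes {V₁ V₂ : Type*} (N₁ : Net V₁) (N₂ : Net V₂) : Net (V₁ ⊕ V₁ × V₂) where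
  verts := Sum.inl '' (N₁.verts \ N₁.leaves) ∪ Sum.inr '' (N₁.leaves ×ˢ N₂.verts)
  root := Sum.inl N₁.root
  arc a b :=
    match a, b with
    | Sum.inl u, Sum.inl w => N₁.arc u w ∧ w ∉ N₁.leaves
    | Sum.inl u, Sum.inr (x, w) => x ∈ N₁.leaves ∧ N₁.arc u x ∧ w = N₂.root
    | Sum.inr (x, w), Sum.inr (x', w') => x = x' ∧ x ∈ N₁.leaves ∧ N₂.arc w w'
    | _, _ => False

end Net

/-- A hierarchy: a collection of sets any two of which are disjoint or nested. -/
def IsHierarchy {V : Type*} (C : Set (Set V)) : Prop :=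
  ∀ A ∈ C, ∀ B ∈ C, A ∩ B = ∅ ∨ A ⊆ B ∨ B ⊆ A

/-!
If `Ñ` is a tree, take visible `u`, `w` whose clusters share a leaf `ℓ`. Following unique
`Cov(N)`-children from a subdividing vertex does not change its cluster, so `u`, `w` may be
replaced by vertices of `Ñ`; every `N`-path between vertices of `Ñ` yields an `Ñ`-path, so both
are `Ñ`-ancestors of `ℓ`, hence comparable in the tree, and their clusters are nested.

Conversely, if the clusters form a hierarchy, two `Cov(N)`-parents `a`, `a'` of a vertex have
nested clusters; a leaf witnessing the visibility of the smaller one then forces `a →_N a'` or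
`a' →_N a`, so one of them lies strictly between the other and the child, which is impossible.
With unique `Cov(N)`-parents, walking back from a vertex of `Ñ` through subdividing vertices
determines its `Ñ`-parent.
-/

open Relation Function

theorem wellFounded_transGen_of_finite {α : Type*} {r : α → α → Prop} {s : Set α}
    (hs : s.Finite) (hmem : ∀ ⦃a b⦄, r a b → a ∈ s) (hirr : ∀ a, ¬ TransGen r a a) :
    WellFounded (TransGen r) := by
  refine Subrelation.wf (fun {a b} hab => ?_)
    (InvImage.wf (fun b => {x | TransGen r x b}.ncard) wellFounded_lt)
  have hfin : {x | TransGen r x b}.Finite := hs.subset fun x hx => by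
    obtain ⟨y, hxy, -⟩ := TransGen.head'_iff.mp hx
    exact hmem hxy
  exact Set.ncard_lt_ncard ⟨fun x hxa => hxa.trans hab, fun hsub => hirr a (hsub hab)⟩ hfin

theorem exists_isChain_cons_append_iff {α : Type*} {r : α → α → Prop} {p : α → Prop}
    {a b : α} :
    (∃ m : List α, (a :: (m ++ [b])).IsChain r ∧ ∀ w ∈ m, p w) ↔
      ∃ c, ReflTransGen (fun x y => r x y ∧ p y) a c ∧ r c b := by
  constructor
  · rintro ⟨m, hch, hm⟩
    induction m generalizing a with
    | nil => exact ⟨a, .refl, by simpa using hch⟩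
    | cons y m ih =>
      rw [List.cons_append, List.isChain_cons_cons] at hch
      obtain ⟨c, hyc, hcb⟩ := ih hch.2 fun w hw => hm w (List.mem_cons_of_mem y hw)
      exact ⟨c, .head ⟨hch.1, hm y List.mem_cons_self⟩ hyc, hcb⟩
  · rintro ⟨c, hac, hcb⟩
    induction hac using ReflTransGen.head_induction_on with
    | refl => exact ⟨[], by simpa using hcb, by simp⟩
    | head hay _ ih =>
      obtain ⟨m, hch, hm⟩ := ih
      exact ⟨_ :: m, hch.cons_cons hay.1, List.forall_mem_cons.mpr ⟨hay.2, hm⟩⟩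

namespace Net

variable {V : Type*} {N : Net V} {X : Set V} {a a' b c t u v x : V}

lemma IsPathFrom.cons {l : List V} (hab : N.arc a b) (h : N.IsPathFrom b c l) :
    N.IsPathFrom a c (a :: l) := by
  obtain ⟨hch, hh, hl⟩ := h
  cases l with
  | nil => simp at hh
  | cons y l =>
    obtain rfl : y = b := by simpa using hh
    exact ⟨hch.cons_cons hab, rfl, by rwa [List.getLast?_cons_cons]⟩

lemma IsPathFrom.reach_start_of_mem {l : List V} (h : N.IsPathFrom a b l) (hx : x ∈ l) :
    N.reach a x :=
  h.1.induction (N.reach a ·) l (fun _ _ hyz hay => hay.tail hyz)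
    (fun hne => Option.some.inj ((List.head?_eq_some_head hne).symm.trans h.2.1) ▸ .refl) x hx

lemma IsPathFrom.reach_end_of_mem {l : List V} (h : N.IsPathFrom a b l) (hx : x ∈ l) :
    N.reach x b :=
  h.1.backwards_induction (N.reach · b) l (fun _ _ hyz hzb => hzb.head hyz)
    (fun hne => Option.some.inj ((List.getLast?_eq_some_getLast hne).symm.trans h.2.2) ▸ .refl)
    x hx

lemma exists_isPathFrom_append {l : List V} (hat : N.reach a t) (hl : N.IsPathFrom t b l) :
    ∃ l', N.IsPathFrom a b (l' ++ l) ∧ ∀ x ∈ l', N.reach x t := by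
  induction hat using ReflTransGen.head_induction_on with
  | refl => exact ⟨[], hl, by simp⟩
  | head hac hct ih =>
    obtain ⟨l', hp, hl'⟩ := ih
    exact ⟨_ :: l', hp.cons hac, List.forall_mem_cons.mpr ⟨.head hac hct, hl'⟩⟩

lemma exists_isPathFrom (h : N.reach a b) : ∃ l, N.IsPathFrom a b l :=
  let ⟨_, hp, _⟩ := exists_isPathFrom_append h ⟨List.isChain_singleton b, rfl, rfl⟩
  ⟨_, hp⟩

lemma reach_or_reach_of_forall_isPathFrom_mem (hv : ∀ l, N.IsPathFrom a b l → v ∈ l)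
    (hat : N.reach a t) (htb : N.reach t b) : N.reach t v ∨ N.reach v t := by
  obtain ⟨l, hl⟩ := exists_isPathFrom htb
  obtain ⟨l', hp, hl'⟩ := exists_isPathFrom_append hat hl
  rcases List.mem_append.mp (hv _ hp) with h | h
  · exact Or.inr (hl' v h)
  · exact Or.inl (hl.reach_start_of_mem h)

lemma reach_of_reflTransGen {r : V → V → Prop} (hr : ∀ a b, r a b → N.reach a b)
    (h : ReflTransGen r a b) : N.reach a b :=
  ReflTransGen.lift' id hr a b h

lemma visible_of_mem_leaves (hx : x ∈ N.leaves) : N.Visible x :=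
  ⟨hx.1, x, hx, fun _ hl => List.mem_of_getLast? hl.2.2⟩

lemma cluster_subset_of_reach (h : N.reach u v) : N.cluster v ⊆ N.cluster u :=
  fun _ hx => ⟨hx.1, h.trans hx.2⟩

lemma transGen_of_reach (h : N.reach a b) (hne : a ≠ b) : TransGen N.arc a b :=
  (reflTransGen_iff_eq_or_transGen.mp h).resolve_left hne.symm

lemma reach_of_cov_arc (h : N.cov.arc a b) : N.reach a b := h.2.2.2.1

lemma ne_of_cov_arc (h : N.cov.arc a b) : a ≠ b := h.2.2.1

lemma isTree_iff {M : Net V} (hfin : M.verts.Finite)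
    (hmem : ∀ ⦃u v⦄, M.arc u v → u ∈ M.verts ∧ v ∈ M.verts) :
    M.IsTree ↔ ∀ ⦃a a' b⦄, M.arc a b → M.arc a' b → a = a' := by
  have hpar : ∀ v, {u | M.arc u v}.Finite := fun v => hfin.subset fun u hu => (hmem hu).1
  constructor
  · intro h a a' b hab ha'b
    exact (Set.ncard_le_one (hpar b)).mp (h b (hmem hab).2) a hab a' ha'b
  · exact fun h v _ => (Set.ncard_le_one (hpar v)).mpr fun a ha a' ha' => h ha ha'

lemma exists_isPathFrom_interior_iff {M : Net V} {p : V → Prop} :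
    (∃ l, M.IsPathFrom a b l ∧ 2 ≤ l.length ∧ ∀ w ∈ l.tail.dropLast, p w) ↔
      ∃ m : List V, (a :: (m ++ [b])).IsChain M.arc ∧ ∀ w ∈ m, p w := by
  constructor
  · rintro ⟨_ | ⟨y, l⟩, ⟨hch, hh, hl⟩, hlen, hint⟩
    · simp at hlen
    obtain rfl : y = a := by simpa using hh
    have hl0 : l ≠ [] := by rintro rfl; simp at hlen
    obtain rfl : l.getLast hl0 = b := by
      rw [List.getLast?_cons, List.getLast?_eq_some_getLast hl0] at hl
      simpa using hl
    exact ⟨l.dropLast, by rwa [List.dropLast_append_getLast], hint⟩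
  · rintro ⟨m, hch, hm⟩
    refine ⟨a :: (m ++ [b]), ⟨hch, rfl, ?_⟩, by simp, ?_⟩
    · rw [← List.cons_append, List.getLast?_concat]
    · rwa [List.tail_cons, List.dropLast_concat]

def subdivArc (N : Net V) (x y : V) : Prop := N.cov.arc x y ∧ N.cov.Subdividing y

lemma normalise_arc_iff :
    N.normalise.arc u v ↔ u ∈ N.normalise.verts ∧ v ∈ N.normalise.verts ∧
      ∃ c, ReflTransGen N.subdivArc u c ∧ N.cov.arc c v := by
  simp only [normalise, Set.mem_ofPred_eq]
  rw [exists_isPathFrom_interior_iff, exists_isChain_cons_append_iff]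
  rfl

lemma reach_of_normalise_arc (h : N.normalise.arc u v) : N.reach u v := by
  obtain ⟨-, -, c, huc, hcv⟩ := normalise_arc_iff.mp h
  exact (reach_of_reflTransGen (fun _ _ h => reach_of_cov_arc h.1) huc).trans
    (reach_of_cov_arc hcv)

lemma normalise_reach_of_cov_reach (hu : u ∈ N.normalise.verts) (ht : t ∈ N.normalise.verts)
    (h : ReflTransGen N.cov.arc u t) : ReflTransGen N.normalise.arc u t := by
  -- `Q a`: either `a = t`, or `a` has a would-be `Ñ`-child `b` (an actual one once `a ∈ Ñ`)
  -- with `b →_Ñ* t`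
  let Q a := a = t ∨ ∃ b, (∃ c, ReflTransGen N.subdivArc a c ∧ N.cov.arc c b) ∧
    b ∈ N.normalise.verts ∧ ReflTransGen N.normalise.arc b t
  have hQ : ∀ a ∈ N.normalise.verts, Q a → ReflTransGen N.normalise.arc a t := by
    rintro a ha (rfl | ⟨b, hab, hb, hbt⟩)
    · exact .refl
    · exact .head (normalise_arc_iff.mpr ⟨ha, hb, hab⟩) hbt
  refine hQ u hu ?_
  clear hu
  induction h using ReflTransGen.head_induction_on with
  | refl => exact Or.inl rfl
  | @head a c hac _ ih =>
    by_cases hc : N.cov.Subdividing c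
    · rcases ih with rfl | ⟨b, ⟨d, hcd, hdb⟩, hb, hbt⟩
      · exact (ht.2 hc).elim
      · exact Or.inr ⟨b, ⟨d, .head ⟨hac, hc⟩ hcd, hdb⟩, hb, hbt⟩
    · exact Or.inr ⟨c, ⟨a, .refl, hac⟩, ⟨hac.2.1, hc⟩, hQ c ⟨hac.2.1, hc⟩ ih⟩

namespace IsPhylo

lemma not_transGen_self (hN : N.IsPhylo X) (a : V) : ¬ TransGen N.arc a a := fun h => by
  obtain ⟨b, hab, hba⟩ := TransGen.head'_iff.mp h
  exact hN.acyclic hab hba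

lemma wellFounded_transGen (hN : N.IsPhylo X) : WellFounded (TransGen N.arc) :=
  wellFounded_transGen_of_finite hN.finite (fun _ _ h => (hN.arc_mem h).1) hN.not_transGen_self

lemma wellFounded_transGen_swap (hN : N.IsPhylo X) : WellFounded (TransGen (swap N.arc)) :=
  wellFounded_transGen_of_finite hN.finite (fun _ _ h => (hN.arc_mem h).2)
    fun a h => hN.not_transGen_self a (transGen_swap.mp h)

lemma root_reach (hN : N.IsPhylo X) (hv : v ∈ N.verts) : N.reach N.root v := by
  induction v using hN.wellFounded_transGen.induction with
  | _ v ih =>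
  by_cases hroot : v = N.root
  · exact hroot ▸ .refl
  obtain ⟨u, hu⟩ : ∃ u, N.arc u v := by
    by_contra! h
    exact hroot (hN.root_unique v hv (by simp [inDeg, h]))
  exact (ih u (.single hu) (hN.arc_mem hu).1).tail hu

lemma eq_of_mem_leaves_of_reach (hN : N.IsPhylo X) (hx : x ∈ N.leaves) (h : N.reach x t) :
    t = x := by
  rcases h.cases_head with rfl | ⟨c, hxc, -⟩
  · rfl
  have hout : {w | N.arc x w} = ∅ :=
    (Set.ncard_eq_zero (hN.finite.subset fun w hw => (hN.arc_mem hw).2)).mp hx.2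
  exact (hout.subset hxc).elim

lemma not_cov_arc_of_mem_leaves (hN : N.IsPhylo X) (hx : x ∈ N.leaves) (c : V) :
    ¬ N.cov.arc x c :=
  fun h => ne_of_cov_arc h (hN.eq_of_mem_leaves_of_reach hx (reach_of_cov_arc h)).symm

lemma mem_normalise_verts_of_mem_leaves (hN : N.IsPhylo X) (hx : x ∈ N.leaves) :
    x ∈ N.normalise.verts := by
  refine ⟨visible_of_mem_leaves hx, fun hsub => ?_⟩
  obtain ⟨c, hc⟩ := Set.ncard_eq_one.mp hsub.2
  exact hN.not_cov_arc_of_mem_leaves hx c (hc.symm ▸ rfl : c ∈ {w | N.cov.arc x w})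

lemma exists_leaf_of_visible (hN : N.IsPhylo X) (hv : N.Visible v) :
    ∃ y ∈ N.leaves, N.reach v y ∧
      ∀ t ∈ N.verts, N.reach t y → N.reach t v ∨ N.reach v t := by
  obtain ⟨-, y, hy, hvy⟩ := hv
  obtain ⟨l, hl⟩ := exists_isPathFrom (hN.root_reach hy.1)
  exact ⟨y, hy, hl.reach_end_of_mem (hvy l hl),
    fun t ht hty => reach_or_reach_of_forall_isPathFrom_mem hvy (hN.root_reach ht) hty⟩

lemma exists_cov_arc_of_reach (hN : N.IsPhylo X) (hu : N.Visible u) (ht : N.Visible t)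
    (hr : N.reach u t) (hne : u ≠ t) : ∃ c, N.cov.arc u c ∧ N.reach c t := by
  induction t using hN.wellFounded_transGen.induction with
  | _ t ih =>
  by_cases hw : ∃ w, N.Visible w ∧ w ≠ u ∧ w ≠ t ∧ N.reach u w ∧ N.reach w t
  · obtain ⟨w, hw, hwu, hwt, huw, hwt'⟩ := hw
    obtain ⟨c, hc, hcw⟩ := ih w (transGen_of_reach hwt' hwt) hw huw hwu.symm
    exact ⟨c, hc, hcw.trans hwt'⟩
  · exact ⟨t, ⟨hu, ht, hne, hr, hw⟩, .refl⟩

lemma cov_reach_of_reach (hN : N.IsPhylo X) (hu : N.Visible u) (ht : N.Visible t)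
    (hr : N.reach u t) : ReflTransGen N.cov.arc u t := by
  induction u using hN.wellFounded_transGen_swap.induction with
  | _ u ih =>
  by_cases hut : u = t
  · exact hut ▸ .refl
  obtain ⟨c, hc, hct⟩ := hN.exists_cov_arc_of_reach hu ht hr hut
  exact .head hc (ih c (transGen_swap.mpr (transGen_of_reach (reach_of_cov_arc hc)
    (ne_of_cov_arc hc))) hc.2.1 hct)

lemma normalise_reach_of_reach (hN : N.IsPhylo X) (hu : u ∈ N.normalise.verts)
    (ht : t ∈ N.normalise.verts) (h : N.reach u t) : ReflTransGen N.normalise.arc u t :=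
  normalise_reach_of_cov_reach hu ht (hN.cov_reach_of_reach hu.1 ht.1 h)

lemma cluster_eq_of_unique_cov_arc (hN : N.IsPhylo X) (hvc : N.cov.arc v c)
    (huniq : ∀ c', N.cov.arc v c' → c' = c) : N.cluster v = N.cluster c := by
  refine (Set.Subset.antisymm ?_ (cluster_subset_of_reach (reach_of_cov_arc hvc)))
  rintro ℓ ⟨hℓ, hvℓ⟩
  have hne : v ≠ ℓ := by
    rintro rfl
    exact hN.not_cov_arc_of_mem_leaves hℓ c hvc
  obtain ⟨c', hc', hc'ℓ⟩ :=
    hN.exists_cov_arc_of_reach hvc.1 (visible_of_mem_leaves hℓ) hvℓ hne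
  exact ⟨hℓ, huniq c' hc' ▸ hc'ℓ⟩

lemma exists_mem_normalise_verts_cluster_eq (hN : N.IsPhylo X) (hv : N.Visible v) :
    ∃ v' ∈ N.normalise.verts, N.reach v v' ∧ N.cluster v' = N.cluster v := by
  induction v using hN.wellFounded_transGen_swap.induction with
  | _ v ih =>
  by_cases hsub : N.cov.Subdividing v
  · obtain ⟨c, hc⟩ := Set.ncard_eq_one.mp hsub.2
    obtain ⟨hvc, huniq⟩ := Set.eq_singleton_iff_unique_mem.mp hc
    obtain ⟨v', hv', hcv', hcl⟩ := ih c (transGen_swap.mpr (transGen_of_reach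
      (reach_of_cov_arc hvc) (ne_of_cov_arc hvc))) hvc.2.1
    exact ⟨v', hv', (reach_of_cov_arc hvc).trans hcv',
      hcl.trans (hN.cluster_eq_of_unique_cov_arc hvc huniq).symm⟩
  · exact ⟨v, ⟨hv, hsub⟩, .refl, rfl⟩

lemma isHierarchy_of_normalise_parent_unique (hN : N.IsPhylo X)
    (huniq : ∀ ⦃a a' b⦄, N.normalise.arc a b → N.normalise.arc a' b → a = a') :
    IsHierarchy (N.cluster '' {v | N.Visible v}) := by
  rintro _ ⟨u, hu, rfl⟩ _ ⟨w, hw, rfl⟩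
  rcases (N.cluster u ∩ N.cluster w).eq_empty_or_nonempty with h | ⟨ℓ, hℓu, hℓw⟩
  · exact Or.inl h
  right
  obtain ⟨u', hu', -, hcu⟩ := hN.exists_mem_normalise_verts_cluster_eq hu
  obtain ⟨w', hw', -, hcw⟩ := hN.exists_mem_normalise_verts_cluster_eq hw
  rw [← hcu] at hℓu ⊢
  rw [← hcw] at hℓw ⊢
  have hℓ := hN.mem_normalise_verts_of_mem_leaves hℓu.1
  -- in a digraph with unique parents, two ancestors of the same vertex are comparable
  rcases ReflTransGen.total_of_right_unique (r := swap N.normalise.arc)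
    (fun _ _ _ h h' => huniq h h')
    (reflTransGen_swap.mpr (hN.normalise_reach_of_reach hu' hℓ hℓu.2))
    (reflTransGen_swap.mpr (hN.normalise_reach_of_reach hw' hℓ hℓw.2)) with h | h
  · exact Or.inl (cluster_subset_of_reach
      (reach_of_reflTransGen (fun _ _ => reach_of_normalise_arc) (reflTransGen_swap.mp h)))
  · exact Or.inr (cluster_subset_of_reach
      (reach_of_reflTransGen (fun _ _ => reach_of_normalise_arc) (reflTransGen_swap.mp h)))

lemma reach_or_reach_of_cluster_subset (hN : N.IsPhylo X) (ha : N.Visible a) (hb : N.Visible b)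
    (hab : N.cluster a ⊆ N.cluster b) : N.reach a b ∨ N.reach b a := by
  obtain ⟨y, hy, hay, hcomp⟩ := hN.exists_leaf_of_visible ha
  exact (hcomp b hb.1 (hab ⟨hy, hay⟩).2).symm

lemma cov_parent_unique (hN : N.IsPhylo X) (hH : IsHierarchy (N.cluster '' {v | N.Visible v}))
    (h : N.cov.arc a b) (h' : N.cov.arc a' b) : a = a' := by
  by_contra hne
  obtain ⟨y, hy, hby, -⟩ := hN.exists_leaf_of_visible h.2.1
  have hya : y ∈ N.cluster a := ⟨hy, (reach_of_cov_arc h).trans hby⟩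
  have hya' : y ∈ N.cluster a' := ⟨hy, (reach_of_cov_arc h').trans hby⟩
  have hcomp : N.reach a a' ∨ N.reach a' a := by
    rcases hH _ ⟨a, h.1, rfl⟩ _ ⟨a', h'.1, rfl⟩ with hdisj | hsub | hsub
    · exact (hdisj.subset ⟨hya, hya'⟩).elim
    · exact hN.reach_or_reach_of_cluster_subset h.1 h'.1 hsub
    · exact (hN.reach_or_reach_of_cluster_subset h'.1 h.1 hsub).symm
  rcases hcomp with haa' | ha'a
  · exact h.2.2.2.2 ⟨a', h'.1, Ne.symm hne, ne_of_cov_arc h', haa', reach_of_cov_arc h'⟩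
  · exact h'.2.2.2.2 ⟨a, h.1, hne, ne_of_cov_arc h, ha'a, reach_of_cov_arc h⟩

lemma eq_of_subdivArc_reach (hN : N.IsPhylo X) (hH : IsHierarchy (N.cluster '' {v | N.Visible v}))
    (ha : ¬ N.cov.Subdividing a) (ha' : ¬ N.cov.Subdividing a')
    (h : ReflTransGen N.subdivArc a c)
    (h' : ReflTransGen N.subdivArc a' c) : a = a' := by
  induction c using hN.wellFounded_transGen.induction with
  | _ c ih =>
  rcases h.cases_tail with rfl | ⟨d, had, hdc, hsub⟩ <;>
    rcases h'.cases_tail with rfl | ⟨d', ha'd', hd'c, hsub'⟩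
  · rfl
  · exact (ha hsub').elim
  · exact (ha' hsub).elim
  obtain rfl := hN.cov_parent_unique hH hdc hd'c
  exact ih d (transGen_of_reach (reach_of_cov_arc hdc) (ne_of_cov_arc hdc)) had ha'd'

lemma normalise_parent_unique (hN : N.IsPhylo X) (hH : IsHierarchy (N.cluster '' {v | N.Visible v}))
    ⦃a a' b : V⦄ (h : N.normalise.arc a b) (h' : N.normalise.arc a' b) : a = a' := by
  obtain ⟨ha, -, c, hac, hcb⟩ := normalise_arc_iff.mp h
  obtain ⟨ha', -, c', ha'c', hc'b⟩ := normalise_arc_iff.mp h'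
  obtain rfl := hN.cov_parent_unique hH hcb hc'b
  exact hN.eq_of_subdivArc_reach hH ha.2 ha'.2 hac ha'c'

end IsPhylo

end Net

/-- The normalisation `Ñ` is a tree (every vertex has in-degree at
most 1) if and only if the clusters of the visible vertices of `N` form a hierarchy
on `X`. -/
theorem stmt12 {V : Type*} (N : Net V) (X : Set V) (hN : N.IsPhylo X) :
    N.normalise.IsTree ↔ IsHierarchy (N.cluster '' {v | N.Visible v}) := by
  have hfin : N.normalise.verts.Finite := hN.finite.subset fun v hv => hv.1.1
  rw [Net.isTree_iff hfin fun _ _ h => ⟨h.1, h.2.1⟩]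
  exact ⟨hN.isHierarchy_of_normalise_parent_unique, hN.normalise_parent_unique⟩
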